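/- If the same proportional weights achieve flow value val on graph G-hat and both G-hat and G differ only in the capacities of the impression layer (with L1 difference gamma between the capacity vectors), then the flow value achieved on G is at least val - gamma. -/

import Mathlib

open Finset

/-- Proportional allocation in a layered DAG where impression type `i` has capacity
(multiplicity) `m i`: `LayerAllocM NI N lay C m w j v` is the flow arriving at vertex `v`
of layer `j+1`. -/
noncomputable def LayerAllocM {I V : Type*} [Fintype I] [Fintype V] [DecidableEq V]
    (NI : I → Finset V) (N : V → Finset V) (lay : V → ℕ) (C : V → ℝ)
    (m : I → ℝ) (w : V → ℝ) : ℕ → V → ℝ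
  | 0 => fun v => ∑ i : I, if v ∈ NI i then m i * (w v / ∑ v' ∈ NI i, w v') else 0
  | (j + 1) => fun v => ∑ u : V,
      if v ∈ N u ∧ lay u = j + 1 then
        min (LayerAllocM NI N lay C m w j u) (C u) * (w v / ∑ v' ∈ N u, w v')
      else 0

/-- Flow value: total feasible load of the last layer `d`. -/
noncomputable def LayerValM {I V : Type*} [Fintype I] [Fintype V] [DecidableEq V]
    (NI : I → Finset V) (N : V → Finset V) (lay : V → ℕ) (C : V → ℝ)
    (d : ℕ) (m : I → ℝ) (w : V → ℝ) : ℝ :=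
  ∑ v : V, if lay v = d then min (LayerAllocM NI N lay C m w (d - 1) v) (C v) else 0

/-! Each layer's allocation is a proportional split of the previous layer's feasible loads.
Such a split is `1`-Lipschitz in `ℓ¹`, because the shares of each source sum to at most `1`,
and truncating at a capacity is `1`-Lipschitz as well. By induction on the layers, the
allocations for `m` and `mhat` stay within `ℓ¹`-distance `∑ i, |m i - mhat i|`, hence so do
the values. -/

noncomputable def proportionalSplit {ι V : Type*} [Fintype ι] [DecidableEq V]
    (w : V → ℝ) (S : ι → Finset V) (x : ι → ℝ) (v : V) : ℝ :=
  ∑ u, if v ∈ S u then x u * (w v / ∑ v' ∈ S u, w v') else 0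

lemma sum_div_sum_le_one {V : Type*} {w : V → ℝ} (hw : ∀ v, 0 ≤ w v) (s : Finset V) :
    ∑ v ∈ s, w v / ∑ v' ∈ s, w v' ≤ 1 := by
  rw [← sum_div]
  exact div_le_one_of_le₀ le_rfl (sum_nonneg fun v _ => hw v)

section ProportionalSplit

variable {ι V : Type*} [Fintype ι] [DecidableEq V] {w : V → ℝ} (S : ι → Finset V)

lemma proportionalSplit_sub (x y : ι → ℝ) (v : V) :
    proportionalSplit w S x v - proportionalSplit w S y v = proportionalSplit w S (x - y) v := by
  simp only [proportionalSplit, ← sum_sub_distrib, Pi.sub_apply]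
  refine sum_congr rfl fun u _ => ?_
  split_ifs <;> ring

variable [Fintype V]

lemma sum_abs_proportionalSplit_le (hw : ∀ v, 0 ≤ w v) (x : ι → ℝ) :
    ∑ v, |proportionalSplit w S x v| ≤ ∑ u, |x u| := by
  have hshare : ∀ u v, 0 ≤ w v / ∑ v' ∈ S u, w v' := fun u v =>
    div_nonneg (hw v) (sum_nonneg fun v' _ => hw v')
  calc ∑ v, |proportionalSplit w S x v|
      ≤ ∑ v, ∑ u, if v ∈ S u then |x u| * (w v / ∑ v' ∈ S u, w v') else 0 := by
        refine sum_le_sum fun v _ => (abs_sum_le_sum_abs _ _).trans (sum_le_sum fun u _ => ?_)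
        split_ifs
        · rw [abs_mul, abs_of_nonneg (hshare u v)]
        · simp
    _ = ∑ u, |x u| * ∑ v ∈ S u, w v / ∑ v' ∈ S u, w v' := by
        rw [sum_comm]
        refine sum_congr rfl fun u _ => ?_
        rw [mul_sum, sum_ite_mem, univ_inter]
    _ ≤ ∑ u, |x u| :=
        sum_le_sum fun u _ =>
          mul_le_of_le_one_right (abs_nonneg _) (sum_div_sum_le_one hw (S u))

lemma sum_abs_proportionalSplit_sub_le (hw : ∀ v, 0 ≤ w v) (x y : ι → ℝ) :
    ∑ v, |proportionalSplit w S x v - proportionalSplit w S y v| ≤ ∑ u, |x u - y u| := by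
  simpa only [proportionalSplit_sub, Pi.sub_apply] using sum_abs_proportionalSplit_le S hw (x - y)

end ProportionalSplit

lemma abs_ite_min_sub_ite_min_le (p : Prop) [Decidable p] (a b c : ℝ) :
    |(if p then min a c else 0) - (if p then min b c else 0)| ≤ |a - b| := by
  split_ifs
  · simpa using abs_min_sub_min_le_max a c b c
  · simp

section LayerAlloc

variable {I V : Type*} [Fintype I] [Fintype V] [DecidableEq V]
  (NI : I → Finset V) (N : V → Finset V) (lay : V → ℕ) (C : V → ℝ) (w : V → ℝ)

noncomputable def feasibleLoad (m : I → ℝ) (k j : ℕ) (u : V) : ℝ :=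
  if lay u = k then min (LayerAllocM NI N lay C m w j u) (C u) else 0

lemma layerAllocM_zero (m : I → ℝ) :
    LayerAllocM NI N lay C m w 0 = proportionalSplit w NI m := rfl

lemma layerAllocM_succ (m : I → ℝ) (j : ℕ) :
    LayerAllocM NI N lay C m w (j + 1) =
      proportionalSplit w N (feasibleLoad NI N lay C w m (j + 1) j) := by
  funext v
  simp only [LayerAllocM, proportionalSplit, feasibleLoad]
  refine sum_congr rfl fun u _ => ?_
  by_cases hu : lay u = j + 1 <;> simp [hu]

lemma layerValM_eq_sum_feasibleLoad (d : ℕ) (m : I → ℝ) :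
    LayerValM NI N lay C d m w = ∑ v, feasibleLoad NI N lay C w m d (d - 1) v := rfl

lemma sum_abs_feasibleLoad_sub_le (m mhat : I → ℝ) (k j : ℕ) :
    ∑ u, |feasibleLoad NI N lay C w m k j u - feasibleLoad NI N lay C w mhat k j u|
      ≤ ∑ u, |LayerAllocM NI N lay C m w j u - LayerAllocM NI N lay C mhat w j u| :=
  sum_le_sum fun _ _ => abs_ite_min_sub_ite_min_le _ _ _ _

lemma sum_abs_layerAllocM_sub_le (hw : ∀ v, 0 ≤ w v) (m mhat : I → ℝ) (j : ℕ) :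
    ∑ v, |LayerAllocM NI N lay C m w j v - LayerAllocM NI N lay C mhat w j v|
      ≤ ∑ i, |m i - mhat i| := by
  induction j with
  | zero =>
    simpa only [layerAllocM_zero] using sum_abs_proportionalSplit_sub_le NI hw m mhat
  | succ j ih =>
    rw [layerAllocM_succ, layerAllocM_succ]
    exact (sum_abs_proportionalSplit_sub_le N hw _ _).trans
      ((sum_abs_feasibleLoad_sub_le NI N lay C w m mhat _ j).trans ih)

end LayerAlloc

theorem proportional_value_instance_lipschitz_general
    {I V : Type*} [Fintype I] [Fintype V] [DecidableEq V]
    (NI : I → Finset V) (N : V → Finset V) (lay : V → ℕ) (C : V → ℝ)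
    (d : ℕ)
    (w : V → ℝ) (hw : ∀ v, 0 < w v)
    (m mhat : I → ℝ) :
    LayerValM NI N lay C d mhat w - ∑ i, |m i - mhat i| ≤ LayerValM NI N lay C d m w := by
  have hval : LayerValM NI N lay C d mhat w - LayerValM NI N lay C d m w
      ≤ ∑ i, |mhat i - m i| := by
    rw [layerValM_eq_sum_feasibleLoad, layerValM_eq_sum_feasibleLoad, ← sum_sub_distrib]
    exact (sum_le_sum fun v _ => le_abs_self _).trans
      ((sum_abs_feasibleLoad_sub_le NI N lay C w mhat m d (d - 1)).trans
        (sum_abs_layerAllocM_sub_le NI N lay C w (fun v => (hw v).le) mhat m (d - 1)))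
  simp only [abs_sub_comm (mhat _)] at hval
  linarith

/-- If the same proportional weights achieve value `val` on the instance with impression
capacities `mhat`, then on the instance with impression capacities `m` (all other
capacities equal) they achieve value at least `val - γ`, where
`γ = ∑ i |m i - mhat i|`. -/
theorem proportional_value_instance_lipschitz
    {I V : Type*} [Fintype I] [Fintype V] [DecidableEq V]
    (NI : I → Finset V) (N : V → Finset V) (lay : V → ℕ) (C : V → ℝ)
    (d : ℕ) (hd : 1 ≤ d)
    (hC : ∀ v, 0 ≤ C v)
    (w : V → ℝ) (hw : ∀ v, 0 < w v)
    (m mhat : I → ℝ) (hm : ∀ i, 0 ≤ m i) (hmhat : ∀ i, 0 ≤ mhat i) :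
    LayerValM NI N lay C d mhat w - ∑ i, |m i - mhat i| ≤ LayerValM NI N lay C d m w :=
  proportional_value_instance_lipschitz_general NI N lay C d w hw m mhat
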